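/- (Uniqueness in errors-and-erasures decoding of Tanner codes) Let ${\mathcal C}_{\mathrm{Tan}}$ be the Tanner code on an $(n,d,\lambda)$-expander $G=(L,R,E)$ with left code ${\mathcal C}_1$ of distance $\delta_L$ and right code ${\mathcal C}_2$ of distance $\delta_R$, and suppose $\lambda \le \frac{\varepsilon}{8}\min(\delta_L,\delta_R)$ for some $\varepsilon > 0$. Let $g \in ({\mathcal C}_1 \cup \{\bot\})^L$ be a left-local assignment with an $s$ fraction of erasures. Then there is at most one codeword $h \in {\mathcal C}_{\mathrm{Tan}}$ satisfying $2\Delta_L(g,h) + s \le \delta_R - 4\varepsilon$, where $\Delta_L(g,h)$ is the fraction of non-erased left vertices $\ell$ with $g_\ell \ne h_\ell$ (divided by $|L|$). -/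

import Mathlib

/-!
Let `S ⊆ L` and `T ⊆ R` be the vertices at which two such codewords `h₁ ≠ h₂` disagree.
Every disagreeing edge runs between `S` and `T`, and by the distances of the local codes each
vertex of `S` carries at least `δL d` of them and each vertex of `T` at least `δR d`; the mixing
lemma bounds their number by `d|S||T|/n + λ d √(|S||T|)`. A vertex of `S` is erased in `g` or
is an error with respect to `h₁` or to `h₂`, so adding the two closeness bounds gives
`|S| ≤ (δR - 4ε) n`. With this the right-hand count forces `|T| ≤ (δL / 32)² |S|`, and then the
left-hand count `δL |S| ≤ |T| + λ √(|S||T|)` fails.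
-/

open Finset

open scoped Classical

/-- Number of edges of the (sub)graph `P` between `S` and `T`. -/
noncomputable def eCount {L R : Type*} (P : L → R → Prop) (S : Finset L) (T : Finset R) : ℕ :=
  ((S ×ˢ T).filter fun p => P p.1 p.2).card

section EdgeCount

variable {L R : Type*}

lemma eCount_eq_sum (P : L → R → Prop) (S : Finset L) (T : Finset R) :
    eCount P S T = ∑ ℓ ∈ S, #(T.filter (P ℓ)) := by
  simp only [eCount, card_filter, sum_product]

lemma eCount_flip (P : L → R → Prop) (S : Finset L) (T : Finset R) :
    eCount (flip P) T S = eCount P S T := by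
  refine card_bij (fun p _ => p.swap) ?_ (fun p _ q _ h => Prod.swap_injective h) ?_
  · intro p hp
    simp only [mem_filter, mem_product] at hp ⊢
    exact ⟨⟨hp.1.2, hp.1.1⟩, hp.2⟩
  · intro p hp
    refine ⟨p.swap, ?_, p.swap_swap⟩
    simp only [mem_filter, mem_product] at hp ⊢
    exact ⟨⟨hp.1.2, hp.1.1⟩, hp.2⟩

lemma mul_card_le_eCount [Fintype L] (P : L → R → Prop) (S : Finset L) (T : Finset R) (m : ℝ)
    (hm : ∀ ℓ ∈ S, m ≤ #(T.filter (P ℓ))) : m * #S ≤ eCount P univ T := by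
  rw [eCount_eq_sum, Nat.cast_sum]
  calc m * #S = ∑ _ℓ ∈ S, m := by rw [sum_const, nsmul_eq_mul, mul_comm]
    _ ≤ ∑ ℓ ∈ S, (#(T.filter (P ℓ)) : ℝ) := sum_le_sum hm
    _ ≤ ∑ ℓ, (#(T.filter (P ℓ)) : ℝ) :=
      sum_le_sum_of_subset_of_nonneg (subset_univ S) fun _ _ _ => Nat.cast_nonneg _

noncomputable def leftSupport [Fintype L] (P : L → R → Prop) : Finset L :=
  univ.filter fun ℓ => ∃ r, P ℓ r

@[simp]
lemma mem_leftSupport [Fintype L] {P : L → R → Prop} {ℓ : L} :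
    ℓ ∈ leftSupport P ↔ ∃ r, P ℓ r := by
  simp [leftSupport]

lemma eCount_univ_le_eCount_support [Fintype L] [Fintype R] {P Q : L → R → Prop}
    (hPQ : ∀ ℓ r, P ℓ r → Q ℓ r) :
    eCount P univ univ ≤ eCount Q (leftSupport P) (leftSupport (flip P)) := by
  refine card_le_card fun p hp => ?_
  simp only [mem_filter, mem_product, mem_univ, true_and] at hp
  simp only [mem_filter, mem_product, mem_leftSupport]
  exact ⟨⟨⟨p.2, hp⟩, ⟨p.1, hp⟩⟩, hPQ _ _ hp⟩

def disagree {A : Type*} (G : L → R → Prop) (h₁ h₂ : L → R → A) (ℓ : L) (r : R) : Prop :=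
  G ℓ r ∧ h₁ ℓ r ≠ h₂ ℓ r

end EdgeCount

section Views

variable {ι R A : Type*} {G : R → Prop}

lemma card_filter_comp_equiv [Fintype ι] [Fintype R] (e : ι ≃ {r // G r}) (p : R → Prop) :
    #(univ.filter fun k => p (e k).1) = #(univ.filter fun r => G r ∧ p r) := by
  rw [← Fintype.card_subtype, ← Fintype.card_subtype]
  exact Fintype.card_congr
    ((e.subtypeEquiv fun _ => Iff.rfl).trans (Equiv.subtypeSubtypeEquivSubtypeInter G p))

lemma view_ne_iff (e : ι ≃ {r // G r}) (f₁ f₂ : R → A) :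
    ((fun k => f₁ (e k).1) ≠ fun k => f₂ (e k).1) ↔ ∃ r, G r ∧ f₁ r ≠ f₂ r := by
  simp [Function.ne_iff, e.exists_congr_left]

end Views

section Codes

variable {A : Type*} {d : ℕ}

def RelDistAtLeast (C : Set (Fin d → A)) (δ : ℝ) : Prop :=
  ∀ c ∈ C, ∀ c' ∈ C, c ≠ c' → δ * d ≤ #(univ.filter fun k => c k ≠ c' k)

lemma RelDistAtLeast.le_one {C : Set (Fin d → A)} {δ : ℝ} (hC : RelDistAtLeast C δ)
    {c c' : Fin d → A} (hc : c ∈ C) (hc' : c' ∈ C) (hne : c ≠ c') : δ ≤ 1 := by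
  obtain ⟨k, -⟩ := Function.ne_iff.mp hne
  have hd : (0 : ℝ) < d := by exact_mod_cast k.pos
  have hcard : (#(univ.filter fun k => c k ≠ c' k) : ℝ) ≤ d := by
    exact_mod_cast (card_filter_le _ _).trans_eq (card_fin d)
  nlinarith [hC c hc c' hc' hne]

lemma distance_mul_card_leftSupport_le {L R : Type*} [Fintype L] [Fintype R]
    {G : L → R → Prop} (ord : ∀ ℓ, Fin d ≃ {r // G ℓ r})
    {C : Set (Fin d → A)} {δ : ℝ} (hC : RelDistAtLeast C δ)
    {h₁ h₂ : L → R → A} (h₁C : ∀ ℓ, (fun k => h₁ ℓ (ord ℓ k).1) ∈ C)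
    (h₂C : ∀ ℓ, (fun k => h₂ ℓ (ord ℓ k).1) ∈ C) :
    δ * d * #(leftSupport (disagree G h₁ h₂)) ≤ eCount (disagree G h₁ h₂) univ univ := by
  refine mul_card_le_eCount _ _ _ _ fun ℓ hℓ => ?_
  have hne := (view_ne_iff (ord ℓ) (h₁ ℓ) (h₂ ℓ)).mpr (mem_leftSupport.mp hℓ)
  refine (hC _ (h₁C ℓ) _ (h₂C ℓ) hne).trans_eq ?_
  convert congrArg Nat.cast (card_filter_comp_equiv (ord ℓ) fun r => h₁ ℓ r ≠ h₂ ℓ r)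
  exact Iff.rfl

end Codes

lemma card_ne_le_erasures_add_errors {ι β : Type*} [Fintype ι] [DecidableEq β]
    (g : ι → Option β) (v₁ v₂ : ι → β) :
    #(univ.filter fun i => v₁ i ≠ v₂ i) ≤ #(univ.filter fun i => g i = none) +
      #(univ.filter fun i => g i ≠ none ∧ g i ≠ some (v₁ i)) +
      #(univ.filter fun i => g i ≠ none ∧ g i ≠ some (v₂ i)) := by
  refine (card_le_card ?_).trans
    ((card_union_le _ _).trans (Nat.add_le_add_right (card_union_le _ _) _))
  intro i
  simp only [mem_filter, mem_union, mem_univ, true_and]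
  intro h
  rcases g i with _ | c
  · simp
  · by_cases hc : c = v₁ i
    · subst hc; simp [h]
    · simp [hc]

lemma card_ne_le_mul_of_close {ι β : Type*} [Fintype ι] [DecidableEq β]
    (g : ι → Option β) (v₁ v₂ : ι → β) {n : ℕ} (hn : 0 < n) {τ : ℝ}
    (h₁ : 2 * ((#(univ.filter fun i => g i ≠ none ∧ g i ≠ some (v₁ i)) : ℝ) / n) +
      #(univ.filter fun i => g i = none) / n ≤ τ)
    (h₂ : 2 * ((#(univ.filter fun i => g i ≠ none ∧ g i ≠ some (v₂ i)) : ℝ) / n) +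
      #(univ.filter fun i => g i = none) / n ≤ τ) :
    (#(univ.filter fun i => v₁ i ≠ v₂ i) : ℝ) ≤ τ * n := by
  have hn' : (0 : ℝ) < n := by exact_mod_cast hn
  rw [← mul_div_assoc, ← add_div, div_le_iff₀ hn'] at h₁ h₂
  have hcard := (Nat.cast_le (α := ℝ)).mpr (card_ne_le_erasures_add_errors g v₁ v₂)
  push_cast at hcard
  linarith

lemma false_of_mixing_bounds {a b n d e lam ε δL δR : ℝ} (ha : 0 < a) (hb : 0 < b)
    (han : a ≤ n) (hd : 0 < d) (hε : 0 < ε) (hδL : δL ≤ 1) (hδR : δR ≤ 1)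
    (hlam : lam ≤ ε / 8 * min δL δR) (hleft : δL * d * a ≤ e) (hright : δR * d * b ≤ e)
    (hmix : e ≤ d / n * a * b + lam * d * √(a * b)) (herase : a ≤ (δR - 4 * ε) * n) :
    False := by
  set x := √(a * b)
  have hn : 0 < n := ha.trans_le han
  have hx : 0 < x := Real.sqrt_pos.mpr (mul_pos ha hb)
  have hx2 : x ^ 2 = a * b := Real.sq_sqrt (mul_pos ha hb).le
  have hleft' : δL * a ≤ a * b / n + lam * x :=
    le_of_mul_le_mul_left (by linear_combination hleft + hmix) hd
  have hright' : δR * b ≤ a * b / n + lam * x :=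
    le_of_mul_le_mul_left (by linear_combination hright + hmix) hd
  have hlamL : lam ≤ ε / 8 * δL := hlam.trans (by gcongr; exact min_le_left _ _)
  have hεδR : 4 * ε ≤ δR := (sub_pos.mp (pos_of_mul_pos_left (ha.trans_le herase) hn.le)).le
  have h4εb : 4 * ε * b ≤ lam * x := by
    have : a * b / n ≤ (δR - 4 * ε) * b := by
      rw [div_le_iff₀ hn]; linarith [mul_le_mul_of_nonneg_right herase hb.le]
    linarith
  have h32b : 32 * b ≤ δL * x :=
    le_of_mul_le_mul_left (by nlinarith [mul_le_mul_of_nonneg_right hlamL hx.le]) hε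
  have hδL0 : 0 < δL := pos_of_mul_pos_left ((mul_pos (by norm_num) hb).trans_le h32b) hx.le
  have h32x : 32 * x ≤ δL * a :=
    le_of_mul_le_mul_left (by nlinarith [mul_le_mul_of_nonneg_right h32b hx.le]) hb
  have hab : a * b / n ≤ b := by
    rw [div_le_iff₀ hn]; linarith [mul_le_mul_of_nonneg_right han hb.le]
  have hlam32 : lam ≤ 1 / 32 := by nlinarith
  nlinarith [mul_le_mul_of_nonneg_right hlam32 hx.le]

theorem tanner_errors_and_erasures_unique_general {L R A : Type*} [Fintype L] [Fintype R]
    (n d : ℕ) (hL : Fintype.card L = n)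
    (G : L → R → Prop)
    (ordL : ∀ ℓ : L, Fin d ≃ {r : R // G ℓ r})
    (ordR : ∀ r : R, Fin d ≃ {ℓ : L // G ℓ r})
    (lam δL δR ε : ℝ) (hε : 0 < ε)
    (hlam : lam ≤ ε / 8 * min δL δR)
    (hEML : ∀ (S : Finset L) (T : Finset R),
      |(eCount G S T : ℝ) - ((d : ℝ) / n) * S.card * T.card| ≤
        lam * d * Real.sqrt ((S.card : ℝ) * T.card))
    (C₁ C₂ : Set (Fin d → A))
    (hC₁ : ∀ c ∈ C₁, ∀ c' ∈ C₁, c ≠ c' →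
      δL * d ≤ ((Finset.univ.filter fun k : Fin d => c k ≠ c' k).card : ℝ))
    (hC₂ : ∀ c ∈ C₂, ∀ c' ∈ C₂, c ≠ c' →
      δR * d ≤ ((Finset.univ.filter fun k : Fin d => c k ≠ c' k).card : ℝ))
    (g : L → Option (Fin d → A))
    (s : ℝ) (hs : s = ((Finset.univ.filter fun ℓ : L => g ℓ = none).card : ℝ) / n)
    (h₁ h₂ : L → R → A)
    (h₁L : ∀ ℓ : L, (fun k => h₁ ℓ (ordL ℓ k).1) ∈ C₁)
    (h₁R : ∀ r : R, (fun k => h₁ (ordR r k).1 r) ∈ C₂)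
    (h₂L : ∀ ℓ : L, (fun k => h₂ ℓ (ordL ℓ k).1) ∈ C₁)
    (h₂R : ∀ r : R, (fun k => h₂ (ordR r k).1 r) ∈ C₂)
    (hclose₁ : 2 * (((Finset.univ.filter fun ℓ : L =>
        g ℓ ≠ none ∧ g ℓ ≠ some fun k => h₁ ℓ (ordL ℓ k).1).card : ℝ) / n) + s ≤ δR - 4 * ε)
    (hclose₂ : 2 * (((Finset.univ.filter fun ℓ : L =>
        g ℓ ≠ none ∧ g ℓ ≠ some fun k => h₂ ℓ (ordL ℓ k).1).card : ℝ) / n) + s ≤ δR - 4 * ε) :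
    ∀ ℓ r, G ℓ r → h₁ ℓ r = h₂ ℓ r := by
  intro ℓ₀ r₀ hG₀
  by_contra hne₀
  set P := disagree G h₁ h₂
  have hP : P ℓ₀ r₀ := ⟨hG₀, hne₀⟩
  set S := leftSupport P
  set T := leftSupport (flip P)
  have hS : 0 < #S := card_pos.mpr ⟨ℓ₀, mem_leftSupport.mpr ⟨r₀, hP⟩⟩
  have hT : 0 < #T := card_pos.mpr ⟨r₀, mem_leftSupport.mpr ⟨ℓ₀, hP⟩⟩
  have hviewL := (view_ne_iff (ordL ℓ₀) (h₁ ℓ₀) (h₂ ℓ₀)).mpr ⟨r₀, hP⟩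
  have hviewR := (view_ne_iff (ordR r₀) (h₁ · r₀) (h₂ · r₀)).mpr ⟨ℓ₀, hP⟩
  have hd : (0 : ℝ) < d := by exact_mod_cast (Function.ne_iff.mp hviewL).choose.pos
  have hleft : δL * d * #S ≤ eCount P univ univ :=
    distance_mul_card_leftSupport_le ordL hC₁ h₁L h₂L
  have hright : δR * d * #T ≤ eCount P univ univ := by
    rw [← eCount_flip]
    exact distance_mul_card_leftSupport_le (G := flip G) (h₁ := flip h₁) (h₂ := flip h₂)
      ordR hC₂ h₁R h₂R
  have hmix : (eCount P univ univ : ℝ) ≤ d / n * #S * #T + lam * d * √(#S * #T) := by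
    have hsub : (eCount P univ univ : ℝ) ≤ eCount G S T := by
      exact_mod_cast eCount_univ_le_eCount_support (P := P) (Q := G) fun _ _ h => h.1
    linarith [(abs_le.mp (hEML S T)).2]
  have hSn : #S ≤ n := hL ▸ card_le_univ S
  subst hs
  have herase : (#S : ℝ) ≤ (δR - 4 * ε) * n := by
    refine le_trans ?_ (card_ne_le_mul_of_close g (fun ℓ k => h₁ ℓ (ordL ℓ k).1)
      (fun ℓ k => h₂ ℓ (ordL ℓ k).1) (hS.trans_le hSn) hclose₁ hclose₂)
    exact_mod_cast card_le_card fun ℓ hℓ =>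
      mem_filter.mpr ⟨mem_univ ℓ, (view_ne_iff _ _ _).mpr (mem_leftSupport.mp hℓ)⟩
  exact false_of_mixing_bounds (by exact_mod_cast hS) (by exact_mod_cast hT)
    (by exact_mod_cast hSn) hd hε (RelDistAtLeast.le_one hC₁ (h₁L ℓ₀) (h₂L ℓ₀) hviewL)
    (RelDistAtLeast.le_one hC₂ (h₁R r₀) (h₂R r₀) hviewR) hlam hleft hright hmix herase

/-- Uniqueness in errors-and-erasures decoding of Tanner codes: let `C_Tan` be the Tanner code
on an `(n,d,λ)`-expander `G` with left code `C₁` of distance `δL` and right code `C₂` of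
distance `δR`, with `λ ≤ (ε/8)·min(δL,δR)`.  Let `g` assign to each left vertex either a
codeword of `C₁` or an erasure `⊥` (modeled as `Option`), with an `s` fraction of erasures.
Then any two Tanner codewords `h₁, h₂` with `2Δ_L(g,hᵢ) + s ≤ δR - 4ε` agree on every
edge. -/
theorem tanner_errors_and_erasures_unique {L R A : Type*} [Fintype L] [Fintype R]
    (n d : ℕ) (hL : Fintype.card L = n) (hR : Fintype.card R = n)
    (hn : 0 < n) (hd : 0 < d)
    (G : L → R → Prop)
    (ordL : ∀ ℓ : L, Fin d ≃ {r : R // G ℓ r})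
    (ordR : ∀ r : R, Fin d ≃ {ℓ : L // G ℓ r})
    (lam δL δR ε : ℝ) (hε : 0 < ε)
    (hδL : 0 < δL) (hδR : 0 < δR)
    (hlam : lam ≤ ε / 8 * min δL δR)
    (hEML : ∀ (S : Finset L) (T : Finset R),
      |(eCount G S T : ℝ) - ((d : ℝ) / n) * S.card * T.card| ≤
        lam * d * Real.sqrt ((S.card : ℝ) * T.card))
    (C₁ C₂ : Set (Fin d → A))
    (hC₁ : ∀ c ∈ C₁, ∀ c' ∈ C₁, c ≠ c' →
      δL * d ≤ ((Finset.univ.filter fun k : Fin d => c k ≠ c' k).card : ℝ))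
    (hC₂ : ∀ c ∈ C₂, ∀ c' ∈ C₂, c ≠ c' →
      δR * d ≤ ((Finset.univ.filter fun k : Fin d => c k ≠ c' k).card : ℝ))
    (g : L → Option (Fin d → A))
    (hgC : ∀ ℓ c, g ℓ = some c → c ∈ C₁)
    (s : ℝ) (hs : s = ((Finset.univ.filter fun ℓ : L => g ℓ = none).card : ℝ) / n)
    (h₁ h₂ : L → R → A)
    (h₁L : ∀ ℓ : L, (fun k => h₁ ℓ (ordL ℓ k).1) ∈ C₁)
    (h₁R : ∀ r : R, (fun k => h₁ (ordR r k).1 r) ∈ C₂)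
    (h₂L : ∀ ℓ : L, (fun k => h₂ ℓ (ordL ℓ k).1) ∈ C₁)
    (h₂R : ∀ r : R, (fun k => h₂ (ordR r k).1 r) ∈ C₂)
    (hclose₁ : 2 * (((Finset.univ.filter fun ℓ : L =>
        g ℓ ≠ none ∧ g ℓ ≠ some fun k => h₁ ℓ (ordL ℓ k).1).card : ℝ) / n) + s ≤ δR - 4 * ε)
    (hclose₂ : 2 * (((Finset.univ.filter fun ℓ : L =>
        g ℓ ≠ none ∧ g ℓ ≠ some fun k => h₂ ℓ (ordL ℓ k).1).card : ℝ) / n) + s ≤ δR - 4 * ε) :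
    ∀ ℓ r, G ℓ r → h₁ ℓ r = h₂ ℓ r :=
  tanner_errors_and_erasures_unique_general n d hL G ordL ordR lam δL δR ε hε hlam hEML C₁ C₂ hC₁
    hC₂ g s hs h₁ h₂ h₁L h₁R h₂L h₂R hclose₁ hclose₂
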